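/- Hoeffding lower-tail bound for the hypergeometric distribution: Let N ≥ 1, K ≤ N, n ≤ N, and let X be distributed according to the hypergeometric distribution with population size N, K marked items, and n draws, so that E[X] = (K/N)·n. Then for every real χ ≥ 0 with (K/N) − χ ≥ 0, the probability that X ≤ ((K/N) − χ)·n is at most exp(−2·χ²·n). -/

import Mathlib

open Finset

/-- The probability mass function of the hypergeometric distribution with
population size `N`, of which `K` are marked, and `n` draws without replacement:
`Pr[X = j] = (K choose j) · (N−K choose n−j) / (N choose n)`. -/
noncomputable def hypergeomPMF (N K n j : ℕ) : ℝ :=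
  ((K.choose j : ℝ) * ((N - K).choose (n - j) : ℝ)) / (N.choose n : ℝ)

/-! Conditioning on whether the first item drawn is marked (probability `p = K/N`) writes the
moment generating function of `Hypergeometric(N, K, n+1)` as a `p`-mixture of those of
`1 + Hypergeometric(N-1, K-1, n)` and `Hypergeometric(N-1, K, n)`, whose means differ by
`1 - n/(N-1) ∈ [0, 1]`. Hoeffding's lemma for this two-point mixture and induction on `n` give
`E[exp(tX)] ≤ exp(t·Kn/N + n t²/8)`, and the Chernoff bound with `t = -4χ` yields the tail
estimate. -/

open Real ProbabilityTheory MeasureTheory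

theorem two_point_mgf_le {p u v : ℝ} (hp₀ : 0 ≤ p) (hp₁ : p ≤ 1) (hvu : v ≤ u) (huv : u ≤ v + 1)
    (t : ℝ) :
    p * exp (t * u) + (1 - p) * exp (t * v) ≤ exp (t * (p * u + (1 - p) * v) + t ^ 2 / 8) := by
  set μ : Measure Bool := bernoulliMeasure true false ⟨p, hp₀, hp₁⟩
  set X : Bool → ℝ := fun b => cond b u v
  set m := p * u + (1 - p) * v
  have hX : μ[X] = m := by simp [μ, X, m, integral_bernoulliMeasure]
  have hoeffding := (hasSubgaussianMGF_of_mem_Icc (μ := μ) (X := X) (a := v) (b := u)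
    (by fun_prop) (ae_of_all _ fun b => by cases b <;> simp [X, hvu])).mgf_le t
  rw [hX, mgf, integral_bernoulliMeasure] at hoeffding
  simp only [X, cond_true, cond_false, smul_eq_mul] at hoeffding
  have hwidth : (((‖u - v‖₊ / 2) ^ 2 : NNReal) : ℝ) ≤ 1 / 4 := by
    push_cast
    rw [Real.norm_of_nonneg (by linarith)]
    nlinarith
  calc p * exp (t * u) + (1 - p) * exp (t * v)
      = exp (t * m) * (p * exp (t * (u - m)) + (1 - p) * exp (t * (v - m))) := by
        rw [show t * u = t * m + t * (u - m) by ring, show t * v = t * m + t * (v - m) by ring,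
          exp_add, exp_add]
        ring
    _ ≤ exp (t * m) * exp (t ^ 2 / 8) := by
        gcongr
        refine hoeffding.trans (exp_le_exp.mpr ?_)
        nlinarith [sq_nonneg t]
    _ = exp (t * m + t ^ 2 / 8) := (exp_add _ _).symm

theorem sum_ite_le_le_exp_mul_sum_exp {ι : Type*} (s : Finset ι) (x : ι → ℝ) {w : ι → ℝ}
    (hw : ∀ i ∈ s, 0 ≤ w i) {c t : ℝ} (ht : t ≤ 0) :
    ∑ i ∈ s, (if x i ≤ c then w i else 0) ≤ exp (-(t * c)) * ∑ i ∈ s, w i * exp (t * x i) := by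
  rw [mul_sum]
  refine sum_le_sum fun i hi => ?_
  split_ifs with hxc
  · calc w i ≤ w i * exp (t * (x i - c)) :=
          le_mul_of_one_le_right (hw i hi) (one_le_exp (by nlinarith))
      _ = exp (-(t * c)) * (w i * exp (t * x i)) := by
          rw [mul_sub, sub_eq_neg_add, exp_add]
          ring
  · have := hw i hi
    positivity

noncomputable def hypergeomMgf (N K n : ℕ) (t : ℝ) : ℝ :=
  ∑ j ∈ range (n + 1), hypergeomPMF N K n j * exp (t * j)

noncomputable def chooseExpSum (K M n : ℕ) (t : ℝ) : ℝ :=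
  ∑ j ∈ range (n + 1), (K.choose j * M.choose (n - j) : ℝ) * exp (t * j)

theorem hypergeomMgf_eq_chooseExpSum_div (N K n : ℕ) (t : ℝ) :
    hypergeomMgf N K n t = chooseExpSum K (N - K) n t / N.choose n := by
  simp only [hypergeomMgf, chooseExpSum, hypergeomPMF, sum_div]
  exact sum_congr rfl fun j _ => by ring

theorem sum_range_mul_chooseExpSum_left (K M n : ℕ) (t : ℝ) :
    ∑ j ∈ range (n + 2), (j : ℝ) * (K.choose j * M.choose (n + 1 - j) : ℝ) * exp (t * j) =
      K * exp t * chooseExpSum (K - 1) M n t := by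
  rcases K with _ | k
  · simp only [CharP.cast_eq_zero, zero_mul, chooseExpSum]
    refine sum_eq_zero fun j _ => ?_
    rcases j with _ | j <;> simp
  · rw [sum_range_succ', chooseExpSum, mul_sum]
    simp only [CharP.cast_eq_zero, zero_mul, add_zero, add_tsub_cancel_right]
    refine sum_congr rfl fun i _ => ?_
    have hchoose : ((i + 1 : ℕ) : ℝ) * (k + 1).choose (i + 1) = (k + 1 : ℕ) * k.choose i := by
      exact_mod_cast ((Nat.add_one_mul_choose_eq k i).trans (mul_comm _ _)).symm
    rw [show n + 1 - (i + 1) = n - i by omega, show t * ((i + 1 : ℕ) : ℝ) = t + t * i by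
      push_cast; ring, exp_add]
    linear_combination (M.choose (n - i) * exp t * exp (t * i) : ℝ) * hchoose

theorem sum_range_mul_chooseExpSum_right (K M n : ℕ) (t : ℝ) :
    ∑ j ∈ range (n + 2), ((n + 1 - j : ℕ) : ℝ) * (K.choose j * M.choose (n + 1 - j) : ℝ) *
      exp (t * j) = M * chooseExpSum K (M - 1) n t := by
  rcases M with _ | m
  · simp only [CharP.cast_eq_zero, zero_mul]
    refine sum_eq_zero fun j _ => ?_
    rcases h : n + 1 - j with _ | i <;> simp
  · rw [sum_range_succ, chooseExpSum, mul_sum]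
    simp only [Nat.sub_self, CharP.cast_eq_zero, zero_mul, add_zero, add_tsub_cancel_right]
    refine sum_congr rfl fun j hj => ?_
    have hj : j ≤ n := Nat.lt_succ_iff.mp (mem_range.mp hj)
    have hchoose : ((n - j + 1 : ℕ) : ℝ) * (m + 1).choose (n - j + 1) =
        (m + 1 : ℕ) * m.choose (n - j) := by
      exact_mod_cast ((Nat.add_one_mul_choose_eq m (n - j)).trans (mul_comm _ _)).symm
    rw [show n + 1 - j = n - j + 1 by omega]
    linear_combination (K.choose j * exp (t * j) : ℝ) * hchoose

theorem chooseExpSum_succ (K M n : ℕ) (t : ℝ) :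
    (n + 1) * chooseExpSum K M (n + 1) t =
      K * exp t * chooseExpSum (K - 1) M n t + M * chooseExpSum K (M - 1) n t := by
  rw [← sum_range_mul_chooseExpSum_left, ← sum_range_mul_chooseExpSum_right, ← sum_add_distrib,
    chooseExpSum, mul_sum]
  refine sum_congr rfl fun j hj => ?_
  have hj : j ≤ n + 1 := Nat.lt_succ_iff.mp (mem_range.mp hj)
  push_cast [Nat.cast_sub hj]
  ring

-- For `K = 0` the truncated `K - 1` is harmless: its coefficient `K / (N + 1)` vanishes.
theorem hypergeomMgf_succ {N K n : ℕ} (hK : K ≤ N + 1) (hn : n ≤ N) (t : ℝ) :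
    hypergeomMgf (N + 1) K (n + 1) t =
      K / (N + 1) * exp t * hypergeomMgf N (K - 1) n t +
        (1 - K / (N + 1)) * hypergeomMgf N K n t := by
  have hrec := chooseExpSum_succ K (N + 1 - K) n t
  rw [show N + 1 - K - 1 = N - K by omega, Nat.cast_sub hK] at hrec
  have hmarked : (K : ℝ) * chooseExpSum (K - 1) (N + 1 - K) n t =
      K * chooseExpSum (K - 1) (N - (K - 1)) n t := by
    rcases K with _ | k
    · simp
    · rw [show N + 1 - (k + 1) = N - (k + 1 - 1) by omega]
  have hchoose : ((N + 1).choose (n + 1) : ℝ) = (N + 1) * N.choose n / (n + 1) := by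
    rw [eq_div_iff (by positivity)]
    exact_mod_cast (Nat.add_one_mul_choose_eq N n).symm
  have hpos : (0 : ℝ) < N.choose n := by exact_mod_cast Nat.choose_pos hn
  simp only [hypergeomMgf_eq_chooseExpSum_div]
  rw [hchoose]
  push_cast at hrec ⊢
  field_simp
  linear_combination hrec + exp t * hmarked

theorem hypergeomMgf_succ_le {M K n : ℕ} (hK : K ≤ M + 1) (hn : n ≤ M) {t : ℝ}
    (ih : ∀ {K : ℕ}, K ≤ M → hypergeomMgf M K n t ≤ exp (t * (K / M * n) + n * t ^ 2 / 8)) :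
    hypergeomMgf (M + 1) K (n + 1) t ≤
      exp (t * (K / (M + 1 : ℕ) * (n + 1 : ℕ)) + (n + 1 : ℕ) * t ^ 2 / 8) := by
  rw [hypergeomMgf_succ hK hn]
  set p : ℝ := K / (M + 1) with hp
  set r : ℝ := n / M
  set s : ℝ := n * t ^ 2 / 8
  have hp₀ : 0 ≤ p := by positivity
  have hp₁ : p ≤ 1 := div_le_one_of_le₀ (by exact_mod_cast hK) (by positivity)
  have hpK : p * (M + 1) = K := div_mul_cancel₀ _ (by positivity)
  have hr : M * r = n := by
    rcases Nat.eq_zero_or_pos M with hM | hM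
    · simp [r, hM, show n = 0 by omega]
    · exact mul_div_cancel₀ _ (by positivity)
  have hr₀ : 0 ≤ r := by positivity
  have hr₁ : r ≤ 1 := div_le_one_of_le₀ (by exact_mod_cast hn) (by positivity)
  have hmarked : p * exp t * hypergeomMgf M (K - 1) n t ≤ p * exp (t * (1 + (K - 1) * r) + s) := by
    rcases K with _ | k
    · simp [p]
    · rw [mul_assoc]
      refine mul_le_mul_of_nonneg_left ?_ hp₀
      rw [mul_add, mul_one, add_assoc, exp_add]
      refine mul_le_mul_of_nonneg_left ((ih (by omega)).trans_eq ?_) (exp_pos t).le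
      push_cast [r, s]
      ring_nf
  have hunmarked : (1 - p) * hypergeomMgf M K n t ≤ (1 - p) * exp (t * (K * r) + s) := by
    by_cases hKM : K ≤ M
    · refine mul_le_mul_of_nonneg_left ((ih hKM).trans_eq ?_) (by linarith)
      simp only [r]
      ring_nf
    · have : (K : ℝ) = M + 1 := by exact_mod_cast (by omega : K = M + 1)
      simp [p, this, div_self (by positivity : (M : ℝ) + 1 ≠ 0)]
  have hmean : p * (1 + (K - 1) * r) + (1 - p) * (K * r) = K / (M + 1 : ℕ) * (n + 1 : ℕ) := by
    push_cast
    rw [← hp]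
    linear_combination p * hr - r * hpK
  calc _ ≤ p * exp (t * (1 + (K - 1) * r) + s) + (1 - p) * exp (t * (K * r) + s) :=
        add_le_add hmarked hunmarked
    _ = exp s * (p * exp (t * (1 + (K - 1) * r)) + (1 - p) * exp (t * (K * r))) := by
        simp only [exp_add]
        ring
    _ ≤ exp s * exp (t * (p * (1 + (K - 1) * r) + (1 - p) * (K * r)) + t ^ 2 / 8) := by
        gcongr
        exact two_point_mgf_le hp₀ hp₁ (by nlinarith) (by nlinarith) t
    _ = _ := by
        rw [hmean, ← exp_add]
        push_cast [s]
        ring_nf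

theorem hypergeomMgf_le {N K n : ℕ} (hK : K ≤ N) (hn : n ≤ N) (t : ℝ) :
    hypergeomMgf N K n t ≤ exp (t * (K / N * n) + n * t ^ 2 / 8) := by
  induction n generalizing N K with
  | zero => simp [hypergeomMgf, hypergeomPMF]
  | succ n ih =>
    obtain ⟨M, rfl⟩ : ∃ M, N = M + 1 := ⟨N - 1, by omega⟩
    exact hypergeomMgf_succ_le hK (by omega) fun hK' => ih hK' (by omega)

theorem hypergeometric_lower_tail (N K n : ℕ) (hK : K ≤ N) (hn : n ≤ N)
    (χ : ℝ) (hχ : 0 ≤ χ) :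
    (∑ j ∈ Finset.range (n + 1),
        if (j : ℝ) ≤ ((K : ℝ) / N - χ) * n then hypergeomPMF N K n j else 0)
      ≤ Real.exp (-2 * χ ^ 2 * n) := by
  set c : ℝ := (K / N - χ) * n with hc
  calc _ ≤ exp (-(-4 * χ * c)) * hypergeomMgf N K n (-4 * χ) :=
        sum_ite_le_le_exp_mul_sum_exp _ _ (fun j _ => by unfold hypergeomPMF; positivity)
          (by linarith)
    _ ≤ exp (-(-4 * χ * c)) * exp (-4 * χ * (K / N * n) + n * (-4 * χ) ^ 2 / 8) := by
        gcongr
        exact hypergeomMgf_le hK hn _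
    _ = exp (-2 * χ ^ 2 * n) := by
        rw [← exp_add, hc]
        ring_nf
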